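/- arXiv:2107.01878 — 3 statements merged into one kernel-verified Lean document; each statement's English description precedes it below -/
import Mathlib

section
/- Let d ≥ 1 and L ≥ 2^d + 1. If X is a connected union of scale-j blocks (cubes of side L^j partitioning Z^d) containing strictly more than 2^d blocks, then the number of scale-j blocks in X is at least (1+2η) times the number of scale-(j+1) blocks in the closure X̄ (the smallest union of scale-(j+1) blocks containing X), for some constant η = η(d) > 0 depending only on d. -/
/-- Two scale-`j` blocks, indexed by `v, w ∈ ℤ^d`, touch iff their indices differ
by at most one in each coordinate (this corresponds to sup-distance `≤ 1` between
the cubes `[0,L^j)^d + L^j v`). -/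
def BlocksTouch {d : ℕ} (v w : Fin d → ℤ) : Prop :=
  ∀ i, |v i - w i| ≤ 1

/-- A polymer, given by a finite set `S` of block indices, is connected if any two
of its blocks are joined by a chain of touching blocks within `S`. -/
def PolymerConnected {d : ℕ} (S : Finset (Fin d → ℤ)) : Prop :=
  ∀ v ∈ S, ∀ w ∈ S,
    Relation.ReflTransGen (fun a b => a ∈ S ∧ b ∈ S ∧ BlocksTouch a b) v w

namespace LSRAux

open Finset

variable {d : ℕ}

/-- classical filter -/
noncomputable def cfilter {α : Type*} (p : α → Prop) (s : Finset α) : Finset α :=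
  @Finset.filter _ p (Classical.decPred _) s

lemma mem_cfilter {α : Type*} {p : α → Prop} {s : Finset α} {a : α} :
    a ∈ cfilter p s ↔ a ∈ s ∧ p a :=
  @Finset.mem_filter _ _ (Classical.decPred _) _ _

lemma cfilter_subset {α : Type*} (p : α → Prop) (s : Finset α) : cfilter p s ⊆ s :=
  @Finset.filter_subset _ _ (Classical.decPred _) _

/-- Reachability within a finite set of blocks. -/
def Reach (S : Finset (Fin d → ℤ)) (v w : Fin d → ℤ) : Prop :=
  Relation.ReflTransGen (fun a b => a ∈ S ∧ b ∈ S ∧ BlocksTouch a b) v w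

lemma touch_symm {v w : Fin d → ℤ} (h : BlocksTouch v w) : BlocksTouch w v := by
  intro i
  rw [abs_sub_comm]
  exact h i

lemma reach_symm {S : Finset (Fin d → ℤ)} {v w : Fin d → ℤ} (h : Reach S v w) : Reach S w v :=
  (@Relation.ReflTransGen.symmetric _ _ ⟨fun _ _ hab => ⟨hab.2.1, hab.1, touch_symm hab.2.2⟩⟩).symm _ _ h

lemma reach_mono {S T : Finset (Fin d → ℤ)} (hST : S ⊆ T) {v w : Fin d → ℤ}
    (h : Reach S v w) : Reach T v w :=
  Relation.ReflTransGen.mono (p := fun a b => a ∈ T ∧ b ∈ T ∧ BlocksTouch a b)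
    (fun _ _ hab => ⟨hST hab.1, hST hab.2.1, hab.2.2⟩) _ _ h

lemma polymerConnected_singleton {v : Fin d → ℤ} : PolymerConnected ({v} : Finset (Fin d → ℤ)) := by
  intro a ha b hb
  rw [mem_singleton] at ha hb
  subst ha; subst hb
  exact Relation.ReflTransGen.refl

/-- intermediate value property along a chain -/
lemma reach_ivt {S : Finset (Fin d → ℤ)} {u w : Fin d → ℤ} (h : Reach S u w) (hu : u ∈ S)
    (i : Fin d) (t : ℤ) :
    ((u i ≤ t ∧ t ≤ w i) ∨ (w i ≤ t ∧ t ≤ u i)) → ∃ r ∈ S, r i = t := by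
  induction h with
  | refl => intro hc; exact ⟨u, hu, by omega⟩
  | tail h₁ h₂ ih =>
    rename_i b c
    intro hc
    have hbc := h₂.2.2 i
    rw [abs_le] at hbc
    by_cases hmid : (u i ≤ t ∧ t ≤ b i) ∨ (b i ≤ t ∧ t ≤ u i)
    · exact ih hmid
    · push_neg at hmid
      exact ⟨c, h₂.2.1, by omega⟩

/-- exiting a subset along a chain -/
lemma reach_exit {S A : Finset (Fin d → ℤ)} {x y : Fin d → ℤ} (h : Reach S x y) :
    x ∉ A → y ∈ A →
      ∃ b a, Reach (S \ A) x b ∧ b ∈ S ∧ b ∉ A ∧ a ∈ A ∧ BlocksTouch b a := by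
  induction h using Relation.ReflTransGen.head_induction_on with
  | refl => intro hx hy; exact absurd hy hx
  | head h₁ h₂ ih =>
    rename_i p q
    intro hxA hyA
    by_cases hqA : q ∈ A
    · exact ⟨p, q, Relation.ReflTransGen.refl, h₁.1, hxA, hqA, h₁.2.2⟩
    · obtain ⟨b, a, hr, hbS, hbA, haA, ht⟩ := ih hqA hyA
      refine ⟨b, a, Relation.ReflTransGen.head ⟨?_, ?_, h₁.2.2⟩ hr, hbS, hbA, haA, ht⟩
      · exact mem_sdiff.2 ⟨h₁.1, hxA⟩
      · exact mem_sdiff.2 ⟨h₁.2.1, hqA⟩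

lemma conn_insert {A : Finset (Fin d → ℤ)} {a b : Fin d → ℤ} (hA : PolymerConnected A)
    (ha : a ∈ A) (ht : BlocksTouch b a) : PolymerConnected (insert b A) := by
  have hba : Reach (insert b A) b a :=
    Relation.ReflTransGen.single ⟨mem_insert_self b A, mem_insert_of_mem ha, ht⟩
  have key : ∀ x ∈ insert b A, Reach (insert b A) x a := by
    intro x hx
    rcases mem_insert.1 hx with rfl | hxA
    · exact hba
    · exact reach_mono (subset_insert _ _) (hA x hxA a ha)
  intro v hv w hw
  exact (key v hv).trans (reach_symm (key w hw))

/-- grow a connected subset of any size -/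
lemma grow {S : Finset (Fin d → ℤ)} (hS : PolymerConnected S) :
    ∀ k, 0 < k → k ≤ S.card → ∃ A, A ⊆ S ∧ A.card = k ∧ PolymerConnected A := by
  intro k
  induction k with
  | zero => intro h; exact absurd h (lt_irrefl 0)
  | succ k ih =>
    intro _ hk1
    by_cases hk0 : k = 0
    · subst hk0
      obtain ⟨v, hv⟩ := card_pos.1 (by omega : 0 < S.card)
      exact ⟨{v}, singleton_subset_iff.2 hv, card_singleton v, polymerConnected_singleton⟩
    · obtain ⟨A, hAS, hAcard, hAconn⟩ := ih (Nat.pos_of_ne_zero hk0) (by omega)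
      have hne : ¬ S ⊆ A := fun h => by have := card_le_card h; omega
      rw [Finset.not_subset] at hne
      obtain ⟨q, hqS, hqA⟩ := hne
      obtain ⟨p, hp⟩ := card_pos.1 (by omega : 0 < A.card)
      obtain ⟨b, a, _, hbS, hbA, haA, ht⟩ := reach_exit (hS q hqS p (hAS hp)) hqA hp
      refine ⟨insert b A, insert_subset_iff.2 ⟨hbS, hAS⟩, ?_, conn_insert hAconn haA ht⟩
      rw [card_insert_of_notMem hbA, hAcard]

lemma fdiv_cases {Lz : ℤ} (hL : 0 < Lz) {a b : ℤ} (h1 : a ≤ b) (h2 : b < a + Lz) :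
    b.fdiv Lz = a.fdiv Lz ∨ b.fdiv Lz = a.fdiv Lz + 1 := by
  rw [Int.fdiv_eq_ediv_of_nonneg _ hL.le, Int.fdiv_eq_ediv_of_nonneg _ hL.le]
  have lo : a / Lz ≤ b / Lz := Int.ediv_le_ediv hL h1
  have hi : b / Lz ≤ a / Lz + 1 := by
    have h3 : b ≤ a + 1 * Lz := by omega
    have h4 := Int.ediv_le_ediv hL h3
    rwa [Int.add_mul_ediv_right _ _ hL.ne'] at h4
  omega

/-- a connected set with at most `L` blocks meets at most `2^d` cubes -/
lemma span_image_card_le {L : ℕ} (hL0 : 0 < L) {P : Finset (Fin d → ℤ)} (hP : P.Nonempty)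
    (hconn : PolymerConnected P) (hcard : P.card ≤ L) :
    (P.image (fun v i => (v i).fdiv (L : ℤ))).card ≤ 2 ^ d := by
  classical
  have hcast : (0 : ℤ) < (L : ℤ) := by exact_mod_cast hL0
  have key : ∀ i : Fin d, ∃ m : ℤ,
      ∀ v ∈ P, (v i).fdiv (L : ℤ) = m ∨ (v i).fdiv (L : ℤ) = m + 1 := by
    intro i
    obtain ⟨u, hu, hui⟩ :=
      mem_image.1 ((P.image (fun w => w i)).min'_mem (hP.image (fun w => w i)))
    refine ⟨(u i).fdiv (L : ℤ), ?_⟩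
    intro v hv
    have hlow : u i ≤ v i := by
      rw [hui]
      exact min'_le _ _ (mem_image_of_mem _ hv)
    clear hui
    have hupp : v i < u i + (L : ℤ) := by
      by_contra hgt
      push_neg at hgt
      have hsub : Finset.Icc (u i) (u i + (L : ℤ)) ⊆ P.image (fun w => w i) := by
        intro c hc
        rw [Finset.mem_Icc] at hc
        obtain ⟨r, hr, hri⟩ := reach_ivt (hconn u hu v hv) hu i c (Or.inl ⟨by omega, by omega⟩)
        exact mem_image.2 ⟨r, hr, hri⟩
      have h1 := card_le_card hsub
      rw [Int.card_Icc] at h1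
      have h2 : (P.image (fun w => w i)).card ≤ P.card := card_image_le
      generalize (P.image (fun w => w i)).card = cI at h1 h2
      omega
    exact fdiv_cases hcast hlow hupp
  choose q hq using key
  have hsub : P.image (fun v i => (v i).fdiv (L : ℤ)) ⊆
      Fintype.piFinset (fun i => ({q i, q i + 1} : Finset ℤ)) := by
    intro u hu
    obtain ⟨v, hv, rfl⟩ := mem_image.1 hu
    rw [Fintype.mem_piFinset]
    intro i
    rcases hq i v hv with h | h <;> simp [h]
  calc (P.image (fun v i => (v i).fdiv (L : ℤ))).card
      ≤ (Fintype.piFinset (fun i => ({q i, q i + 1} : Finset ℤ))).card := card_le_card hsub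
    _ = ∏ i, ({q i, q i + 1} : Finset ℤ).card := Fintype.card_piFinset _
    _ ≤ ∏ _i : Fin d, 2 := by
        refine Finset.prod_le_prod' (fun i _ => ?_)
        have := card_insert_le (q i) ({q i + 1} : Finset ℤ)
        simpa using this
    _ = 2 ^ d := by simp

/-- Lemma B: a connected set with more than `2^d` blocks meets strictly fewer cubes -/
lemma image_card_lt {L : ℕ} (hL : 2 ^ d + 1 ≤ L) {S : Finset (Fin d → ℤ)}
    (hconn : PolymerConnected S) (hcard : 2 ^ d + 1 ≤ S.card) :
    (S.image (fun v i => (v i).fdiv (L : ℤ))).card < S.card := by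
  classical
  have hpow : 0 < 2 ^ d := pow_pos (by norm_num) d
  obtain ⟨A, hAS, hAcard, hAconn⟩ := grow hconn (2 ^ d + 1) (by positivity) hcard
  have hAne : A.Nonempty := card_pos.1 (by rw [hAcard]; positivity)
  have hA2 : (A.image (fun v i => (v i).fdiv (L : ℤ))).card ≤ 2 ^ d :=
    span_image_card_le (by omega) hAne hAconn (by omega)
  have hsplit : S.image (fun v i => (v i).fdiv (L : ℤ)) ⊆
      (S \ A).image (fun v i => (v i).fdiv (L : ℤ)) ∪ A.image (fun v i => (v i).fdiv (L : ℤ)) := by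
    intro x hx
    obtain ⟨v, hv, rfl⟩ := mem_image.1 hx
    by_cases hvA : v ∈ A
    · exact mem_union_right _ (mem_image_of_mem _ hvA)
    · exact mem_union_left _ (mem_image_of_mem _ (mem_sdiff.2 ⟨hv, hvA⟩))
  have h1 := card_le_card hsplit
  have h3 := card_union_le ((S \ A).image (fun v i => (v i).fdiv (L : ℤ)))
    (A.image (fun v i => (v i).fdiv (L : ℤ)))
  have h4 : ((S \ A).image (fun v i => (v i).fdiv (L : ℤ))).card ≤ (S \ A).card := card_image_le
  have h5 : (S \ A).card + A.card = S.card := card_sdiff_add_card_eq_card hAS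
  generalize (S.image (fun v i => (v i).fdiv (L : ℤ))).card = nS at h1 ⊢
  generalize ((S \ A).image (fun v i => (v i).fdiv (L : ℤ)) ∪
      A.image (fun v i => (v i).fdiv (L : ℤ))).card = nU at h1 h3
  generalize ((S \ A).image (fun v i => (v i).fdiv (L : ℤ))).card = n1 at h3 h4
  generalize (A.image (fun v i => (v i).fdiv (L : ℤ))).card = n2 at h3 hA2
  omega

/-- connected component of `x` within `T` -/
noncomputable def cmp (T : Finset (Fin d → ℤ)) (x : Fin d → ℤ) : Finset (Fin d → ℤ) :=
  cfilter (fun y => Reach T x y) T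

lemma mem_cmp {T : Finset (Fin d → ℤ)} {x y : Fin d → ℤ} :
    y ∈ cmp T x ↔ y ∈ T ∧ Reach T x y := mem_cfilter

lemma cmp_subset (T : Finset (Fin d → ℤ)) (x : Fin d → ℤ) : cmp T x ⊆ T :=
  cfilter_subset _ _

lemma cmp_self {T : Finset (Fin d → ℤ)} {x : Fin d → ℤ} (hx : x ∈ T) : x ∈ cmp T x :=
  mem_cmp.2 ⟨hx, Relation.ReflTransGen.refl⟩

lemma cmp_eq {T : Finset (Fin d → ℤ)} {x z : Fin d → ℤ} (hz : z ∈ cmp T x) :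
    cmp T z = cmp T x := by
  obtain ⟨hzT, hxz⟩ := mem_cmp.1 hz
  ext y
  simp only [mem_cmp]
  constructor
  · rintro ⟨hyT, h⟩; exact ⟨hyT, hxz.trans h⟩
  · rintro ⟨hyT, h⟩; exact ⟨hyT, (reach_symm hxz).trans h⟩

lemma reach_restrict {T : Finset (Fin d → ℤ)} {x y : Fin d → ℤ} (h : Reach T x y) :
    Reach (cmp T x) x y := by
  induction h with
  | refl => exact Relation.ReflTransGen.refl
  | tail h₁ h₂ ih =>
    rename_i b c
    have hb : b ∈ cmp T x := mem_cmp.2 ⟨h₂.1, h₁⟩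
    have hc : c ∈ cmp T x := mem_cmp.2 ⟨h₂.2.1, h₁.tail h₂⟩
    exact ih.tail ⟨hb, hc, h₂.2.2⟩

lemma cmp_conn {T : Finset (Fin d → ℤ)} {x : Fin d → ℤ} :
    PolymerConnected (cmp T x) := by
  intro v hv w hw
  obtain ⟨_, hxv⟩ := mem_cmp.1 hv
  obtain ⟨_, hxw⟩ := mem_cmp.1 hw
  exact (reach_symm (reach_restrict hxv)).trans (reach_restrict hxw)

lemma cmp_boundary {S A₀ : Finset (Fin d → ℤ)} (hconn : PolymerConnected S) (hA₀S : A₀ ⊆ S)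
    (hA₀ne : A₀.Nonempty) {x : Fin d → ℤ} (hx : x ∈ S \ A₀) :
    ∃ b a, b ∈ cmp (S \ A₀) x ∧ a ∈ A₀ ∧ BlocksTouch b a := by
  obtain ⟨a₀, ha₀⟩ := hA₀ne
  have hxS : x ∈ S := (mem_sdiff.1 hx).1
  have hxA : x ∉ A₀ := (mem_sdiff.1 hx).2
  obtain ⟨b, a, hr, hbS, hbA, haA, ht⟩ := reach_exit (hconn x hxS a₀ (hA₀S ha₀)) hxA ha₀
  exact ⟨b, a, mem_cmp.2 ⟨mem_sdiff.2 ⟨hbS, hbA⟩, hr⟩, haA, ht⟩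

/-- the union of small components -/
noncomputable def smallPart (S A₀ : Finset (Fin d → ℤ)) : Finset (Fin d → ℤ) :=
  cfilter (fun z => (cmp (S \ A₀) z).card ≤ 2 ^ d) (S \ A₀)

lemma mem_smallPart {S A₀ : Finset (Fin d → ℤ)} {z : Fin d → ℤ} :
    z ∈ smallPart S A₀ ↔ z ∈ S \ A₀ ∧ (cmp (S \ A₀) z).card ≤ 2 ^ d := mem_cfilter

lemma conn_A {S A₀ : Finset (Fin d → ℤ)} (hconn : PolymerConnected S) (hA₀S : A₀ ⊆ S)
    (hA₀conn : PolymerConnected A₀) (hA₀ne : A₀.Nonempty) :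
    PolymerConnected (A₀ ∪ smallPart S A₀) := by
  obtain ⟨a₀, ha₀⟩ := hA₀ne
  have hsmA : smallPart S A₀ ⊆ A₀ ∪ smallPart S A₀ := subset_union_right
  have hA₀A : A₀ ⊆ A₀ ∪ smallPart S A₀ := subset_union_left
  have key : ∀ x ∈ A₀ ∪ smallPart S A₀, Reach (A₀ ∪ smallPart S A₀) x a₀ := by
    intro x hx
    rcases mem_union.1 hx with hx₀ | hxs
    · exact reach_mono hA₀A (hA₀conn x hx₀ a₀ ha₀)
    · obtain ⟨hxT, hxsmall⟩ := mem_smallPart.1 hxs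
      have hcmpA : cmp (S \ A₀) x ⊆ A₀ ∪ smallPart S A₀ := by
        intro z hz
        have hzT : z ∈ S \ A₀ := cmp_subset _ _ hz
        have hze : cmp (S \ A₀) z = cmp (S \ A₀) x := cmp_eq hz
        exact hsmA (mem_smallPart.2 ⟨hzT, by rw [hze]; exact hxsmall⟩)
      obtain ⟨b, a, hbcmp, haA₀, htouch⟩ := cmp_boundary hconn hA₀S ⟨a₀, ha₀⟩ hxT
      have h1 : Reach (cmp (S \ A₀) x) x b := reach_restrict (mem_cmp.1 hbcmp).2
      have h2 : Reach (A₀ ∪ smallPart S A₀) x b := reach_mono hcmpA h1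
      have h3 : Reach (A₀ ∪ smallPart S A₀) b a :=
        Relation.ReflTransGen.single ⟨hcmpA hbcmp, hA₀A haA₀, htouch⟩
      have h4 : Reach (A₀ ∪ smallPart S A₀) a a₀ := reach_mono hA₀A (hA₀conn a haA₀ a₀ ha₀)
      exact (h2.trans h3).trans h4
  intro v hv w hw
  exact (key v hv).trans (reach_symm (key w hw))

/-- sup-ball of radius 1 around a block -/
def ball (a : Fin d → ℤ) : Finset (Fin d → ℤ) :=
  Fintype.piFinset (fun i => ({a i - 1, a i, a i + 1} : Finset ℤ))

lemma mem_ball_of_touch {a b : Fin d → ℤ} (ht : BlocksTouch b a) : b ∈ ball a := by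
  rw [ball, Fintype.mem_piFinset]
  intro i
  have := ht i
  rw [abs_le] at this
  simp only [mem_insert, mem_singleton]
  omega

lemma ball_card_le (a : Fin d → ℤ) : (ball a).card ≤ 3 ^ d := by
  rw [ball, Fintype.card_piFinset]
  calc ∏ i, ({a i - 1, a i, a i + 1} : Finset ℤ).card ≤ ∏ _i : Fin d, 3 := by
        refine Finset.prod_le_prod' (fun i _ => ?_)
        have h1 := card_insert_le (a i - 1) ({a i, a i + 1} : Finset ℤ)
        have h2 := card_insert_le (a i) ({a i + 1} : Finset ℤ)
        simp only [card_singleton] at h2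
        omega
    _ = 3 ^ d := by simp

/-- the boundary blocks of small components -/
noncomputable def nbr (S A₀ : Finset (Fin d → ℤ)) : Finset (Fin d → ℤ) :=
  cfilter (fun b => (∃ a ∈ A₀, BlocksTouch b a) ∧ (cmp (S \ A₀) b).card ≤ 2 ^ d) (S \ A₀)

/-- the blocks in big components -/
noncomputable def bigSet (S A₀ : Finset (Fin d → ℤ)) : Finset (Fin d → ℤ) :=
  cfilter (fun z => 2 ^ d < (cmp (S \ A₀) z).card) (S \ A₀)

def Kd (d : ℕ) : ℕ := (2 ^ d + 1) * (6 ^ d + 1)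

lemma Kd_pos : 0 < Kd d := by unfold Kd; positivity

lemma two_pow_succ_le_Kd : 2 ^ d + 1 ≤ Kd d := by
  calc 2 ^ d + 1 = (2 ^ d + 1) * 1 := (mul_one _).symm
    _ ≤ Kd d := Nat.mul_le_mul_left _ (Nat.le_add_left 1 (6 ^ d))

/-- main counting lemma, in ℕ -/
lemma mainNat (L : ℕ) (hL : 2 ^ d + 1 ≤ L) :
    ∀ N (S : Finset (Fin d → ℤ)), S.card ≤ N → PolymerConnected S → 2 ^ d < S.card →
      Kd d * (S.image (fun v i => (v i).fdiv (L : ℤ))).card ≤ (Kd d - 1) * S.card := by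
  classical
  intro N
  induction N with
  | zero =>
    intro S h0 _ hgt
    exact absurd (Nat.lt_of_lt_of_le hgt h0) (Nat.not_lt_zero _)
  | succ N ih =>
    intro S hcardN hconn hbig
    have hpow : 0 < 2 ^ d := pow_pos (by norm_num) d
    have hK1 : 1 ≤ Kd d := Kd_pos
    by_cases hbase : S.card ≤ Kd d
    · -- base case
      have hlt := image_card_lt hL hconn hbig
      have e1 : Kd d * ((S.image (fun v i => (v i).fdiv (L : ℤ))).card + 1) ≤ Kd d * S.card :=
        Nat.mul_le_mul_left _ hlt
      zify [hK1] at e1 ⊢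
      have hbase' : (S.card : ℤ) ≤ (Kd d : ℤ) := by exact_mod_cast hbase
      nlinarith [e1, hbase']
    · -- recursive case
      push_neg at hbase
      obtain ⟨A₀, hA₀S, hA₀card, hA₀conn⟩ :=
        grow hconn (2 ^ d + 1) (by positivity) (le_trans two_pow_succ_le_Kd hbase.le)
      have hA₀ne : A₀.Nonempty := card_pos.1 (by rw [hA₀card]; positivity)
      have hA₀pos : 1 ≤ A₀.card := by rw [hA₀card]; exact Nat.le_add_left 1 _
      have hsmT : smallPart S A₀ ⊆ S \ A₀ := fun z hz => (mem_smallPart.1 hz).1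
      have hAS : A₀ ∪ smallPart S A₀ ⊆ S := union_subset hA₀S (hsmT.trans sdiff_subset)
      have hA₀A : A₀ ⊆ A₀ ∪ smallPart S A₀ := subset_union_left
      have hAconn : PolymerConnected (A₀ ∪ smallPart S A₀) := conn_A hconn hA₀S hA₀conn hA₀ne
      have hAbig : 2 ^ d < (A₀ ∪ smallPart S A₀).card := by
        have := card_le_card hA₀A
        omega
      have hTcard : (S \ A₀).card + A₀.card = S.card := card_sdiff_add_card_eq_card hA₀S
      -- bound on |A|
      have hSmCover : smallPart S A₀ ⊆ (nbr S A₀).biUnion (cmp (S \ A₀)) := by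
        intro z hz
        obtain ⟨hzT, hzsmall⟩ := mem_smallPart.1 hz
        obtain ⟨b, a, hbcmp, haA₀, htouch⟩ := cmp_boundary hconn hA₀S hA₀ne hzT
        have hbT : b ∈ S \ A₀ := cmp_subset _ _ hbcmp
        have hbz : cmp (S \ A₀) b = cmp (S \ A₀) z := cmp_eq hbcmp
        refine mem_biUnion.2 ⟨b, ?_, ?_⟩
        · exact mem_cfilter.2 ⟨hbT, ⟨a, haA₀, htouch⟩, by rw [hbz]; exact hzsmall⟩
        · rw [hbz]; exact cmp_self hzT
      have hSmCard : (smallPart S A₀).card ≤ (nbr S A₀).card * 2 ^ d := by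
        calc (smallPart S A₀).card ≤ ((nbr S A₀).biUnion (cmp (S \ A₀))).card :=
              card_le_card hSmCover
          _ ≤ ∑ b ∈ nbr S A₀, (cmp (S \ A₀) b).card := card_biUnion_le
          _ ≤ ∑ _b ∈ nbr S A₀, 2 ^ d :=
              Finset.sum_le_sum (fun b hb => (mem_cfilter.1 hb).2.2)
          _ = (nbr S A₀).card * 2 ^ d := by rw [Finset.sum_const, smul_eq_mul]
      have hNbCard : (nbr S A₀).card ≤ (2 ^ d + 1) * 3 ^ d := by
        have hNbSub : nbr S A₀ ⊆ A₀.biUnion ball := by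
          intro b hb
          obtain ⟨a, haA₀, ht⟩ := (mem_cfilter.1 hb).2.1
          exact mem_biUnion.2 ⟨a, haA₀, mem_ball_of_touch ht⟩
        calc (nbr S A₀).card ≤ (A₀.biUnion ball).card := card_le_card hNbSub
          _ ≤ ∑ a ∈ A₀, (ball a).card := card_biUnion_le
          _ ≤ ∑ _a ∈ A₀, 3 ^ d := Finset.sum_le_sum (fun a _ => ball_card_le a)
          _ = A₀.card * 3 ^ d := by rw [Finset.sum_const, smul_eq_mul]
          _ = (2 ^ d + 1) * 3 ^ d := by rw [hA₀card]
      have hAcard : (A₀ ∪ smallPart S A₀).card ≤ Kd d := by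
        have h3 : 2 ^ d + 1 + (2 ^ d + 1) * 3 ^ d * 2 ^ d = Kd d := by
          have h6 : (6 : ℕ) ^ d = 3 ^ d * 2 ^ d := by
            rw [show (6 : ℕ) = 3 * 2 from rfl, mul_pow]
          unfold Kd
          rw [h6]
          ring
        calc (A₀ ∪ smallPart S A₀).card ≤ A₀.card + (smallPart S A₀).card := card_union_le _ _
          _ ≤ (2 ^ d + 1) + (nbr S A₀).card * 2 ^ d := Nat.add_le_add hA₀card.le hSmCard
          _ ≤ (2 ^ d + 1) + (2 ^ d + 1) * 3 ^ d * 2 ^ d :=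
              Nat.add_le_add_left (Nat.mul_le_mul_right _ hNbCard) _
          _ = Kd d := h3
      -- clean cardinality facts for the induction hypothesis
      have hAcardN : (A₀ ∪ smallPart S A₀).card ≤ N := by omega
      have hcmpN : ∀ z, z ∈ S \ A₀ → (cmp (S \ A₀) z).card ≤ N := by
        intro z hz
        have := card_le_card (cmp_subset (S \ A₀) z)
        omega
      -- cover
      have hcover' : ∀ v ∈ S,
          v ∈ (A₀ ∪ smallPart S A₀) ∪ ((bigSet S A₀).image (cmp (S \ A₀))).biUnion id := by
        intro v hv
        by_cases hvA₀ : v ∈ A₀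
        · exact mem_union_left _ (hA₀A hvA₀)
        · have hvT : v ∈ S \ A₀ := mem_sdiff.2 ⟨hv, hvA₀⟩
          by_cases hsm : (cmp (S \ A₀) v).card ≤ 2 ^ d
          · exact mem_union_left _ (mem_union_right _ (mem_smallPart.2 ⟨hvT, hsm⟩))
          · refine mem_union_right _ (mem_biUnion.2 ⟨cmp (S \ A₀) v, ?_, cmp_self hvT⟩)
            exact mem_image_of_mem _ (mem_cfilter.2 ⟨hvT, by omega⟩)
      -- image counting
      have himg : (S.image (fun v i => (v i).fdiv (L : ℤ))).card ≤
          ((A₀ ∪ smallPart S A₀).image (fun v i => (v i).fdiv (L : ℤ))).card +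
            ∑ t ∈ (bigSet S A₀).image (cmp (S \ A₀)),
              (t.image (fun v i => (v i).fdiv (L : ℤ))).card := by
        have h1 : S.image (fun v i => (v i).fdiv (L : ℤ)) ⊆
            ((A₀ ∪ smallPart S A₀).image (fun v i => (v i).fdiv (L : ℤ))) ∪
              ((((bigSet S A₀).image (cmp (S \ A₀))).biUnion id).image
                (fun v i => (v i).fdiv (L : ℤ))) := by
          intro x hx
          obtain ⟨v, hv, rfl⟩ := mem_image.1 hx
          rcases mem_union.1 (hcover' v hv) with h | h
          · exact mem_union_left _ (mem_image_of_mem _ h)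
          · exact mem_union_right _ (mem_image_of_mem _ h)
        refine le_trans (card_le_card h1) (le_trans (card_union_le _ _) ?_)
        refine Nat.add_le_add_left ?_ _
        rw [Finset.biUnion_image]
        refine le_trans card_biUnion_le (le_of_eq ?_)
        rfl
      -- disjointness
      have hdisjT : ∀ t ∈ (bigSet S A₀).image (cmp (S \ A₀)),
          ∀ t' ∈ (bigSet S A₀).image (cmp (S \ A₀)), t ≠ t' → Disjoint (id t) (id t') := by
        intro t ht t' ht' hne
        obtain ⟨z, _, rfl⟩ := mem_image.1 ht
        obtain ⟨z', _, rfl⟩ := mem_image.1 ht'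
        rw [Finset.disjoint_left]
        intro w hw hw'
        exact hne ((cmp_eq hw).symm.trans (cmp_eq hw'))
      have hdisjA : Disjoint (A₀ ∪ smallPart S A₀)
          (((bigSet S A₀).image (cmp (S \ A₀))).biUnion id) := by
        rw [Finset.disjoint_left]
        intro w hwA hwB
        obtain ⟨t, htT, hwt⟩ := mem_biUnion.1 hwB
        obtain ⟨z, hzB, rfl⟩ := mem_image.1 htT
        have hzbig := (mem_cfilter.1 hzB).2
        have hwz : cmp (S \ A₀) w = cmp (S \ A₀) z := cmp_eq hwt
        rcases mem_union.1 hwA with h | h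
        · exact (mem_sdiff.1 (cmp_subset _ _ hwt)).2 h
        · have hsm := (mem_smallPart.1 h).2
          rw [hwz] at hsm
          exact absurd hzbig (not_lt.2 hsm)
      have hsum : (A₀ ∪ smallPart S A₀).card +
          ∑ t ∈ (bigSet S A₀).image (cmp (S \ A₀)), t.card ≤ S.card := by
        have h2 : ((((bigSet S A₀).image (cmp (S \ A₀)))).biUnion id).card =
            ∑ t ∈ (bigSet S A₀).image (cmp (S \ A₀)), t.card :=
          card_biUnion hdisjT
        have h1 : ((A₀ ∪ smallPart S A₀) ∪
            (((bigSet S A₀).image (cmp (S \ A₀))).biUnion id)).card =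
            (A₀ ∪ smallPart S A₀).card +
              ((((bigSet S A₀).image (cmp (S \ A₀)))).biUnion id).card :=
          card_union_of_disjoint hdisjA
        have h3 : (A₀ ∪ smallPart S A₀) ∪
            (((bigSet S A₀).image (cmp (S \ A₀))).biUnion id) ⊆ S := by
          refine union_subset hAS ?_
          intro w hw
          obtain ⟨t, htT, hwt⟩ := mem_biUnion.1 hw
          obtain ⟨z, _, rfl⟩ := mem_image.1 htT
          exact sdiff_subset (cmp_subset _ _ hwt)
        have h4 := card_le_card h3
        rw [h1, h2] at h4
        exact h4
      -- apply induction hypothesis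
      have hpartA : Kd d * ((A₀ ∪ smallPart S A₀).image (fun v i => (v i).fdiv (L : ℤ))).card ≤
          (Kd d - 1) * (A₀ ∪ smallPart S A₀).card :=
        ih _ hAcardN hAconn hAbig
      have hpartT : ∀ t ∈ (bigSet S A₀).image (cmp (S \ A₀)),
          Kd d * (t.image (fun v i => (v i).fdiv (L : ℤ))).card ≤ (Kd d - 1) * t.card := by
        intro t ht
        obtain ⟨z, hz, rfl⟩ := mem_image.1 ht
        have hz' := mem_cfilter.1 hz
        exact ih _ (hcmpN z hz'.1) cmp_conn hz'.2
      -- combine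
      calc Kd d * (S.image (fun v i => (v i).fdiv (L : ℤ))).card
          ≤ Kd d * (((A₀ ∪ smallPart S A₀).image (fun v i => (v i).fdiv (L : ℤ))).card +
              ∑ t ∈ (bigSet S A₀).image (cmp (S \ A₀)),
                (t.image (fun v i => (v i).fdiv (L : ℤ))).card) :=
            Nat.mul_le_mul_left _ himg
        _ = Kd d * ((A₀ ∪ smallPart S A₀).image (fun v i => (v i).fdiv (L : ℤ))).card +
              ∑ t ∈ (bigSet S A₀).image (cmp (S \ A₀)),
                Kd d * (t.image (fun v i => (v i).fdiv (L : ℤ))).card := by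
            rw [Nat.mul_add, Finset.mul_sum]
        _ ≤ (Kd d - 1) * (A₀ ∪ smallPart S A₀).card +
              ∑ t ∈ (bigSet S A₀).image (cmp (S \ A₀)), (Kd d - 1) * t.card :=
            Nat.add_le_add hpartA (Finset.sum_le_sum hpartT)
        _ = (Kd d - 1) * ((A₀ ∪ smallPart S A₀).card +
              ∑ t ∈ (bigSet S A₀).image (cmp (S \ A₀)), t.card) := by
            rw [Nat.mul_add, Finset.mul_sum]
        _ ≤ (Kd d - 1) * S.card := Nat.mul_le_mul_left _ hsum

end LSRAux

/-- Large connected polymers lose volume under reblocking: there is `η = η(d) > 0`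
such that for `L ≥ 2^d + 1`, any connected polymer `X` (a finite set `S` of scale-`j`
block indices) with more than `2^d` blocks satisfies
`|B_j(X)| ≥ (1+2η) |B_{j+1}(X̄)|`, where `X̄` is the smallest scale-`(j+1)` polymer
containing `X`, whose block indices are the images `v ↦ ⌊v/L⌋`. -/
theorem largeSet_reblocking (d : ℕ) (hd : 1 ≤ d) :
    ∃ η : ℝ, 0 < η ∧
      ∀ L : ℕ, 2 ^ d + 1 ≤ L →
        ∀ S : Finset (Fin d → ℤ), S.Nonempty → PolymerConnected S →
          2 ^ d < S.card →
          (1 + 2 * η) * ((S.image (fun v i => (v i).fdiv (L : ℤ))).card : ℝ)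
            ≤ (S.card : ℝ) := by
  classical
  have hpow : 0 < 2 ^ d := pow_pos (by norm_num) d
  have hK2 : 2 ≤ LSRAux.Kd d := by
    have h1 : 2 * 1 ≤ (2 ^ d + 1) * (6 ^ d + 1) :=
      Nat.mul_le_mul (by omega) (Nat.le_add_left 1 (6 ^ d))
    simpa [LSRAux.Kd] using h1
  have hK1R : (0 : ℝ) < (LSRAux.Kd d : ℝ) - 1 := by
    have : (2 : ℝ) ≤ (LSRAux.Kd d : ℝ) := by exact_mod_cast hK2
    linarith
  refine ⟨1 / (2 * ((LSRAux.Kd d : ℝ) - 1)), by positivity, ?_⟩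
  intro L hL S _hSne hSconn hSbig
  have hnat := LSRAux.mainNat L hL S.card S le_rfl hSconn hSbig
  have key : (LSRAux.Kd d : ℝ) * ((S.image (fun v i => (v i).fdiv (L : ℤ))).card : ℝ) ≤
      ((LSRAux.Kd d : ℝ) - 1) * (S.card : ℝ) := by
    have hcast := (Nat.cast_le (α := ℝ)).2 hnat
    rw [Nat.cast_mul, Nat.cast_mul, Nat.cast_sub (le_trans one_le_two hK2),
      Nat.cast_one] at hcast
    exact hcast
  have heta : (1 + 2 * (1 / (2 * ((LSRAux.Kd d : ℝ) - 1)))) =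
      (LSRAux.Kd d : ℝ) / ((LSRAux.Kd d : ℝ) - 1) := by
    field_simp
    ring
  rw [heta, div_mul_eq_mul_div, div_le_iff₀ hK1R]
  nlinarith [key]
end

section
/- Let A > 1, let η > 0 satisfy: every connected non-small scale-j polymer X with closure U has |B_j(X)| ≥ (1+2η)|B_{j+1}(U)|, and suppose the number of scale-j polymers with closure U is at most 2^{L^d |B_{j+1}(U)|}. Then for A sufficiently large (depending on L, d, η), A^{|B_{j+1}(U)|} · Σ_{X connected, non-small, X̄ = U} (A/2)^{−|B_j(X)|} ≤ A^{−η |B_{j+1}(U)|}. -/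
/-- Reblocking estimate for large sets: suppose every connected non-small scale-`j`
polymer `X` with closure `U` satisfies `|B_j(X)| ≥ (1+2η)|B_{j+1}(U)|`, and that the
number of such polymers with closure `U` is at most `2^{L^d |B_{j+1}(U)|}`.  Then for
`A` sufficiently large (depending only on `L`, `d`, `η`), uniformly in `U`,
`A^{|B_{j+1}(U)|} Σ_X (A/2)^{-|B_j(X)|} ≤ A^{-η |B_{j+1}(U)|}`.
Here the polymers `X` with closure `U` are abstracted as a finite set `𝒳` with a
block-counting function `m`, and `n = |B_{j+1}(U)|`. -/
theorem reblocking_sum_bound (d L : ℕ) (hL : 1 ≤ L) (η : ℝ) (hη : 0 < η) :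
    ∃ A₀ : ℝ, 1 < A₀ ∧
      ∀ A : ℝ, A₀ ≤ A →
        ∀ (n : ℕ) (ι : Type) (𝒳 : Finset ι) (m : ι → ℕ),
          (∀ X ∈ 𝒳, (1 + 2 * η) * (n : ℝ) ≤ (m X : ℝ)) →
          𝒳.card ≤ 2 ^ (L ^ d * n) →
          A ^ (n : ℝ) * ∑ X ∈ 𝒳, (A / 2) ^ (-(m X : ℝ))
            ≤ A ^ (-η * (n : ℝ)) := by
  set c : ℝ := (L : ℝ) ^ d + 1 + 2 * η with hcdef
  have hc0 : (0:ℝ) < c := by positivity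
  refine ⟨max 2 ((2:ℝ) ^ (c / η)), lt_max_of_lt_left one_lt_two, ?_⟩
  intro A hA n ι 𝒳 m hm hcard
  have hA2 : (2:ℝ) ≤ A := le_trans (le_max_left _ _) hA
  have hA0 : (0:ℝ) < A := by linarith
  have hhalf : (1:ℝ) ≤ A / 2 := by linarith
  have hkey : (2:ℝ) ^ c ≤ A ^ η := by
    have h1 : (2:ℝ) ^ (c / η) ≤ A := le_trans (le_max_right _ _) hA
    calc (2:ℝ) ^ c = ((2:ℝ) ^ (c / η)) ^ η := by
          rw [← Real.rpow_mul (by norm_num : (0:ℝ) ≤ 2), div_mul_cancel₀ _ hη.ne']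
      _ ≤ A ^ η := Real.rpow_le_rpow (by positivity) h1 hη.le
  have hsum : ∑ X ∈ 𝒳, (A/2) ^ (-(m X : ℝ)) ≤ (𝒳.card : ℝ) * (A/2) ^ (-((1+2*η)*(n:ℝ))) := by
    calc ∑ X ∈ 𝒳, (A/2) ^ (-(m X:ℝ)) ≤ ∑ X ∈ 𝒳, (A/2) ^ (-((1+2*η)*(n:ℝ))) := by
          refine Finset.sum_le_sum fun X hX => ?_
          exact Real.rpow_le_rpow_of_exponent_le hhalf (by linarith [hm X hX])
      _ = _ := by rw [Finset.sum_const, nsmul_eq_mul]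
  have hcard' : (𝒳.card : ℝ) ≤ (2:ℝ) ^ ((L:ℝ)^d * (n:ℝ)) := by
    calc (𝒳.card : ℝ) ≤ ((2 ^ (L ^ d * n) : ℕ) : ℝ) := by exact_mod_cast hcard
      _ = (2:ℝ) ^ ((L:ℝ)^d * (n:ℝ)) := by
          push_cast
          rw [← Real.rpow_natCast 2 (L ^ d * n)]
          push_cast
          ring_nf
  have hpos : (0:ℝ) < (A/2) ^ (-((1+2*η)*(n:ℝ))) := Real.rpow_pos_of_pos (by linarith) _
  calc A ^ (n:ℝ) * ∑ X ∈ 𝒳, (A/2) ^ (-(m X : ℝ))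
      ≤ A ^ (n:ℝ) * ((2:ℝ) ^ ((L:ℝ)^d * (n:ℝ)) * (A/2) ^ (-((1+2*η)*(n:ℝ)))) := by
        refine mul_le_mul_of_nonneg_left ?_ (Real.rpow_nonneg hA0.le _)
        exact le_trans hsum (mul_le_mul_of_nonneg_right hcard' hpos.le)
    _ = A ^ (-(2*η)*(n:ℝ)) * (2:ℝ) ^ (c * (n:ℝ)) := by
        rw [Real.div_rpow hA0.le (by norm_num : (0:ℝ) ≤ 2), div_eq_mul_inv,
          ← Real.rpow_neg (by norm_num : (0:ℝ) ≤ 2), neg_neg,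
          show -(2*η)*(n:ℝ) = (n:ℝ) + -((1+2*η)*(n:ℝ)) by ring,
          show c*(n:ℝ) = (L:ℝ)^d*(n:ℝ) + (1+2*η)*(n:ℝ) by rw [hcdef]; ring,
          Real.rpow_add hA0, Real.rpow_add (by norm_num : (0:ℝ) < 2)]
        ring
    _ ≤ A ^ (-(2*η)*(n:ℝ)) * A ^ (η * (n:ℝ)) := by
        refine mul_le_mul_of_nonneg_left ?_ (Real.rpow_nonneg hA0.le _)
        calc (2:ℝ) ^ (c * (n:ℝ)) = ((2:ℝ) ^ c) ^ (n:ℝ) := by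
              rw [← Real.rpow_mul (by norm_num : (0:ℝ) ≤ 2)]
          _ ≤ (A ^ η) ^ (n:ℝ) := Real.rpow_le_rpow (by positivity) hkey (Nat.cast_nonneg n)
          _ = A ^ (η * (n:ℝ)) := by rw [← Real.rpow_mul hA0.le]
    _ = A ^ (-η * (n:ℝ)) := by
        rw [← Real.rpow_add hA0]; congr 1; ring
end

section
/- Finite range factorization: if C is a symmetric matrix on a finite set Λ with C_{xy} = 0 whenever dist(x,y) > R, and F₁ ∈ 𝓝(X₁), F₂ ∈ 𝓝(X₂) with dist(X₁, X₂) > R, then E_C θ (F₁ F₂) = (E_C θ F₁)(E_C θ F₂), where E_C θ = e^{𝓛_C}, 𝓛_C = Σ_{x,y} C_{xy} ∂_{ψ_y}∂_{ψ̄_x}, and both F₁, F₂ are even elements. -/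
lemma aux_sum_range {A : Type*} [AddCommMonoid A] (g : ℕ → ℕ → A) (k : ℕ) :
    ∑ n ∈ Finset.range k, ∑ i ∈ Finset.range (n+1), g i (n-i)
      = ∑ i ∈ Finset.range k, ∑ j ∈ Finset.range (k-i), g i j := by
  induction k with
  | zero => simp
  | succ k ih =>
    rw [Finset.sum_range_succ, ih,
      Finset.sum_range_succ (f := fun i => ∑ j ∈ Finset.range (k+1-i), g i j)]
    have h1 : ∀ i ∈ Finset.range k, ∑ j ∈ Finset.range (k+1-i), g i j
        = ∑ j ∈ Finset.range (k-i), g i j + g i (k-i) := by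
      intro i hi
      have h : k+1-i = (k-i)+1 := by
        have := Finset.mem_range.mp hi; omega
      rw [h, Finset.sum_range_succ]
    rw [Finset.sum_congr rfl h1, Finset.sum_add_distrib]
    have h3 : ∑ i ∈ Finset.range (k+1), g i (k-i)
        = ∑ i ∈ Finset.range k, g i (k-i) + g k 0 := by
      rw [Finset.sum_range_succ]; simp
    rw [h3]
    have h2 : k+1-k = 1 := by omega
    rw [h2, Finset.sum_range_one]
    abel


/-- Finite range factorization: let `𝓛_C = Σ_{x,y} C_{xy} ∂_{ψ_y} ∂_{ψ̄_x}` act on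
a Grassmann algebra, whose calculus is axiomatized by: a graded Leibniz rule for the
derivatives `∂_{ψ_x}, ∂_{ψ̄_x}` (with sign depending on the parity of the first
factor), parity exchange under derivatives, and locality of the subalgebras
`𝒩(X)` (derivatives preserve `𝒩(X)` and vanish for indices outside `X`).
If `C_{xy} = 0` whenever `dist(x,y) > R`, the supports `X₁, X₂` satisfy
`dist(X₁, X₂) > R`, `𝓛_C` is nilpotent, and `F₁ ∈ 𝒩(X₁)`, `F₂ ∈ 𝒩(X₂)` are even,
then `E_C θ (F₁ F₂) = (E_C θ F₁)(E_C θ F₂)`, where `E_C θ = e^{𝓛_C}` is given by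
its terminating exponential series. -/
theorem finite_range_factorization {Λ N : Type*} [Fintype Λ] [Ring N] [Algebra ℝ N]
    (dist : Λ → Λ → ℝ) (R : ℝ)
    (Dψ Dψb : Λ → (N →ₗ[ℝ] N))
    (IsEven IsOdd : N → Prop)
    (𝒩 : Set Λ → Subalgebra ℝ N)
    -- graded Leibniz rule
    (hLeibE : ∀ (x : Λ) (a b : N), IsEven a →
      Dψ x (a * b) = Dψ x a * b + a * Dψ x b ∧
      Dψb x (a * b) = Dψb x a * b + a * Dψb x b)
    (hLeibO : ∀ (x : Λ) (a b : N), IsOdd a →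
      Dψ x (a * b) = Dψ x a * b - a * Dψ x b ∧
      Dψb x (a * b) = Dψb x a * b - a * Dψb x b)
    -- derivatives exchange parity
    (hparity : ∀ (x : Λ) (a : N),
      (IsEven a → IsOdd (Dψ x a) ∧ IsOdd (Dψb x a)) ∧
      (IsOdd a → IsEven (Dψ x a) ∧ IsEven (Dψb x a)))
    -- locality of the derivatives with respect to the supports
    (hsuppMem : ∀ (X : Set Λ) (x : Λ) (a : N), a ∈ 𝒩 X →
      Dψ x a ∈ 𝒩 X ∧ Dψb x a ∈ 𝒩 X)
    (hsuppZero : ∀ (X : Set Λ) (x : Λ) (a : N), a ∈ 𝒩 X → x ∉ X →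
      Dψ x a = 0 ∧ Dψb x a = 0)
    -- the finite range covariance and the operator 𝓛_C
    (C : Λ → Λ → ℝ) (hC : ∀ x y : Λ, R < dist x y → C x y = 0)
    (L : N →ₗ[ℝ] N) (hL : L = ∑ x : Λ, ∑ y : Λ, C x y • (Dψ y ∘ₗ Dψb x))
    (M : ℕ) (hnil : L ^ (M + 1) = 0)
    (hevenL : ∀ a : N, IsEven a → IsEven (L a))
    -- separated supports and even elements
    (X₁ X₂ : Set Λ) (hsep : ∀ x ∈ X₁, ∀ y ∈ X₂, R < dist x y ∧ R < dist y x)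
    (F₁ F₂ : N) (hF₁ : F₁ ∈ 𝒩 X₁) (hF₂ : F₂ ∈ 𝒩 X₂)
    (hE₁ : IsEven F₁) (hE₂ : IsEven F₂) :
    ∀ k : ℕ, 2 * M + 2 ≤ k →
      (∑ n ∈ Finset.range k, ((n.factorial : ℝ))⁻¹ • L ^ n) (F₁ * F₂)
        = ((∑ n ∈ Finset.range k, ((n.factorial : ℝ))⁻¹ • L ^ n) F₁)
            * ((∑ n ∈ Finset.range k, ((n.factorial : ℝ))⁻¹ • L ^ n) F₂) := by
  -- L is a derivation across the two supports (for even elements)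
  have key : ∀ a ∈ 𝒩 X₁, ∀ b ∈ 𝒩 X₂, IsEven a → IsEven b →
      L (a * b) = L a * b + a * L b := by
    intro a ha b hb hea heb
    have hterm : ∀ x y : Λ,
        C x y • Dψ y (Dψb x (a * b))
          = (C x y • Dψ y (Dψb x a)) * b + a * (C x y • Dψ y (Dψb x b)) := by
      intro x y
      have hodd : IsOdd (Dψb x a) := ((hparity x a).1 hea).2
      rw [(hLeibE x a b hea).2, map_add, (hLeibO y (Dψb x a) b hodd).1,
        (hLeibE y a (Dψb x b) hea).1]
      have hz1 : C x y • (Dψb x a * Dψ y b) = 0 := by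
        by_cases hx : x ∈ X₁
        · by_cases hy : y ∈ X₂
          · rw [hC x y (hsep x hx y hy).1, zero_smul]
          · rw [(hsuppZero X₂ y b hb hy).1, mul_zero, smul_zero]
        · rw [(hsuppZero X₁ x a ha hx).2, zero_mul, smul_zero]
      have hz2 : C x y • (Dψ y a * Dψb x b) = 0 := by
        by_cases hy : y ∈ X₁
        · by_cases hx : x ∈ X₂
          · rw [hC x y (hsep y hy x hx).2, zero_smul]
          · rw [(hsuppZero X₂ x b hb hx).2, mul_zero, smul_zero]
        · rw [(hsuppZero X₁ y a ha hy).1, zero_mul, smul_zero]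
      rw [smul_add, smul_sub, smul_add, hz1, hz2, sub_zero, zero_add,
        smul_mul_assoc, mul_smul_comm]
    rw [hL]
    simp only [LinearMap.sum_apply, LinearMap.smul_apply, LinearMap.coe_comp,
      Function.comp_apply]
    simp only [hterm, Finset.sum_add_distrib, ← Finset.sum_mul, ← Finset.mul_sum]
  -- L preserves supports
  have hLmem : ∀ (X : Set Λ) (a : N), a ∈ 𝒩 X → L a ∈ 𝒩 X := by
    intro X a h
    rw [hL]
    simp only [LinearMap.sum_apply, LinearMap.smul_apply, LinearMap.coe_comp,
      Function.comp_apply]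
    exact Subalgebra.sum_mem _ fun x _ => Subalgebra.sum_mem _ fun y _ =>
      Subalgebra.smul_mem _ ((hsuppMem X y _ ((hsuppMem X x a h).2)).1) _
  have mem1 : ∀ i : ℕ, (L ^ i) F₁ ∈ 𝒩 X₁ := by
    intro i
    induction i with
    | zero => simpa using hF₁
    | succ i ih => rw [pow_succ', Module.End.mul_apply]; exact hLmem _ _ ih
  have mem2 : ∀ i : ℕ, (L ^ i) F₂ ∈ 𝒩 X₂ := by
    intro i
    induction i with
    | zero => simpa using hF₂
    | succ i ih => rw [pow_succ', Module.End.mul_apply]; exact hLmem _ _ ih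
  have even1 : ∀ i : ℕ, IsEven ((L ^ i) F₁) := by
    intro i
    induction i with
    | zero => simpa using hE₁
    | succ i ih => rw [pow_succ', Module.End.mul_apply]; exact hevenL _ ih
  have even2 : ∀ i : ℕ, IsEven ((L ^ i) F₂) := by
    intro i
    induction i with
    | zero => simpa using hE₂
    | succ i ih => rw [pow_succ', Module.End.mul_apply]; exact hevenL _ ih
  -- binomial formula
  have hpow : ∀ n : ℕ, (L ^ n) (F₁ * F₂)
      = ∑ i ∈ Finset.range (n+1),
          ((n.choose i : ℝ)) • ((L ^ i) F₁ * (L ^ (n - i)) F₂) := by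
    intro n
    induction n with
    | zero => simp
    | succ n ih =>
      rw [pow_succ', Module.End.mul_apply, ih, map_sum]
      simp only [map_smul]
      have hterm : ∀ i ∈ Finset.range (n+1),
          (n.choose i : ℝ) • L ((L ^ i) F₁ * (L ^ (n - i)) F₂)
          = (n.choose i : ℝ) • ((L ^ (i+1)) F₁ * (L ^ (n - i)) F₂)
            + (n.choose i : ℝ) • ((L ^ i) F₁ * (L ^ (n - i + 1)) F₂) := by
        intro i _
        rw [key _ (mem1 i) _ (mem2 (n-i)) (even1 i) (even2 (n-i)), smul_add,
          pow_succ' L i, pow_succ' L (n-i), Module.End.mul_apply, Module.End.mul_apply]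
      rw [Finset.sum_congr rfl hterm, Finset.sum_add_distrib]
      -- expand the RHS
      have expand :
          ∑ i ∈ Finset.range (n+2),
            (((n+1).choose i : ℝ)) • ((L ^ i) F₁ * (L ^ ((n+1) - i)) F₂)
          = ∑ i ∈ Finset.range (n+1),
              (n.choose i : ℝ) • ((L ^ (i+1)) F₁ * (L ^ (n - i)) F₂)
            + ∑ i ∈ Finset.range (n+1),
              (n.choose i : ℝ) • ((L ^ i) F₁ * (L ^ (n - i + 1)) F₂) := by
        rw [Finset.sum_range_succ']
        simp only [Nat.succ_sub_succ_eq_sub, Nat.choose_succ_succ, Nat.cast_add,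
          add_smul, Finset.sum_add_distrib, Nat.choose_zero_right, Nat.cast_one]
        rw [add_assoc]
        congr 1
        have step : ∑ i ∈ Finset.range (n+1),
            (n.choose (i+1) : ℝ) • ((L ^ (i+1)) F₁ * (L ^ (n - i)) F₂)
            + (1:ℝ) • ((L ^ 0) F₁ * (L ^ (n+1-0)) F₂)
            = ∑ i ∈ Finset.range (n+2),
                (n.choose i : ℝ) • ((L ^ i) F₁ * (L ^ (n + 1 - i)) F₂) := by
          rw [Finset.sum_range_succ'
            (f := fun i => (n.choose i : ℝ) • ((L ^ i) F₁ * (L ^ (n + 1 - i)) F₂))]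
          simp only [Nat.succ_sub_succ_eq_sub, Nat.choose_zero_right, Nat.cast_one]
        rw [step, Finset.sum_range_succ]
        simp only [Nat.choose_succ_self, Nat.cast_zero, zero_smul, add_zero]
        refine Finset.sum_congr rfl fun i hi => ?_
        have h : n + 1 - i = n - i + 1 := by
          have := Finset.mem_range.mp hi; omega
        rw [h]
      rw [expand]
  -- vanishing of high powers
  have hzero : ∀ i : ℕ, M < i → (L ^ i : N →ₗ[ℝ] N) = 0 := by
    intro i h
    have hsplit : L ^ i = L ^ (i - (M+1)) * L ^ (M+1) := by
      rw [← pow_add]; congr 1; omega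
    rw [hsplit, hnil, mul_zero]
  intro k hk
  set g : ℕ → ℕ → N := fun i j =>
    (((i.factorial : ℝ))⁻¹ * ((j.factorial : ℝ))⁻¹) • ((L ^ i) F₁ * (L ^ j) F₂)
    with hgdef
  have hgz : ∀ i j, M < i ∨ M < j → g i j = 0 := by
    intro i j h
    rcases h with h | h
    · simp [hgdef, hzero i h]
    · simp [hgdef, hzero j h]
  have hcoef : ∀ n i : ℕ, i ≤ n →
      ((n.factorial : ℝ))⁻¹ * (n.choose i : ℝ)
        = ((i.factorial : ℝ))⁻¹ * (((n-i).factorial : ℝ))⁻¹ := by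
    intro n i h
    have h1 := Nat.choose_mul_factorial_mul_factorial h
    have h2 : (n.choose i : ℝ) * (i.factorial : ℝ) * ((n-i).factorial : ℝ)
        = (n.factorial : ℝ) := by exact_mod_cast congrArg Nat.cast h1
    have hi : (i.factorial : ℝ) ≠ 0 := Nat.cast_ne_zero.2 (Nat.factorial_ne_zero i)
    have hni : ((n-i).factorial : ℝ) ≠ 0 := Nat.cast_ne_zero.2 (Nat.factorial_ne_zero _)
    have hn : (n.factorial : ℝ) ≠ 0 := Nat.cast_ne_zero.2 (Nat.factorial_ne_zero n)
    field_simp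
    linear_combination h2
  simp only [LinearMap.sum_apply, LinearMap.smul_apply]
  have hLHS : ∑ n ∈ Finset.range k, ((n.factorial : ℝ))⁻¹ • (L ^ n) (F₁ * F₂)
      = ∑ n ∈ Finset.range k, ∑ i ∈ Finset.range (n+1), g i (n-i) := by
    refine Finset.sum_congr rfl fun n _ => ?_
    rw [hpow n, Finset.smul_sum]
    refine Finset.sum_congr rfl fun i hi => ?_
    rw [smul_smul, hcoef n i (Nat.lt_succ_iff.mp (Finset.mem_range.mp hi))]
  have hRHS : (∑ n ∈ Finset.range k, ((n.factorial : ℝ))⁻¹ • (L ^ n) F₁)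
      * (∑ n ∈ Finset.range k, ((n.factorial : ℝ))⁻¹ • (L ^ n) F₂)
      = ∑ i ∈ Finset.range k, ∑ j ∈ Finset.range k, g i j := by
    rw [Finset.sum_mul_sum]
    refine Finset.sum_congr rfl fun i _ => Finset.sum_congr rfl fun j _ => ?_
    rw [smul_mul_assoc, mul_smul_comm, smul_smul]
  rw [hLHS, hRHS, aux_sum_range]
  refine Finset.sum_congr rfl fun i hi => ?_
  by_cases hiM : M < i
  · rw [Finset.sum_eq_zero fun j _ => hgz i j (Or.inl hiM),
      Finset.sum_eq_zero fun j _ => hgz i j (Or.inl hiM)]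
  · refine Finset.sum_subset (Finset.range_subset_range.2 (by omega)) ?_
    intro j hj hj'
    refine hgz i j (Or.inr ?_)
    simp only [Finset.mem_range] at hj hj'
    omega
end
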